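/- Let f : ℝ → ℝ be an SD map. Then f maps positive reals to positive reals (f(x) > 0 whenever x > 0) and f is strictly increasing: a > b implies f(a) > f(b). -/

import Mathlib

/-- A function `f : F → F` on a field `F` is an *SD map* if for all `x ≠ y` one has
`f x ≠ f y` and `f ((x+y)/(x-y)) = (f x + f y) / (f x - f y)`. -/
def IsSDMap {F : Type*} [Field F] (f : F → F) : Prop :=
  ∀ ⦃x y : F⦄, x ≠ y →
    f x ≠ f y ∧ f ((x + y) / (x - y)) = (f x + f y) / (f x - f y)

/-!
Writing `g t = (t + 1) / (t - 1)`, one has `(x + y) / (x - y) = g (x / y)`, so the SD identity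
at `(x, y)` and at `(x / y, 1)` gives `g (f (x / y)) = g (f x / f y)`. As `g` is injective, `f` is
multiplicative. Over `ℝ` this makes `f x = f (√x) ^ 2` positive for `x > 0`, and `f` odd. Since
`g` maps `(1, ∞)` to positive reals and `(0, 1)` to negative ones, `f` maps `(1, ∞)` into
itself, which together with multiplicativity gives monotonicity.
-/

section Field

variable {F : Type*} [Field F]

theorem add_div_sub_eq_of_ne_zero {x y : F} (hy : y ≠ 0) :
    (x + y) / (x - y) = (x / y + 1) / (x / y - 1) := by
  rw [div_add_one hy, div_sub_one hy, div_div_div_cancel_right₀ hy]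

theorem eq_of_add_one_div_sub_one_eq [NeZero (2 : F)] {a b : F} (ha : a ≠ 1) (hb : b ≠ 1)
    (h : (a + 1) / (a - 1) = (b + 1) / (b - 1)) : a = b := by
  rw [div_eq_div_iff (sub_ne_zero.mpr ha) (sub_ne_zero.mpr hb)] at h
  have h2 : (2 : F) * (b - a) = 0 := by linear_combination h
  exact (sub_eq_zero.mp ((mul_eq_zero.mp h2).resolve_left two_ne_zero)).symm

namespace IsSDMap

variable {f : F → F}

theorem injective (hf : IsSDMap f) : Function.Injective f := fun _ _ h =>
  not_not.mp fun hxy => (hf hxy).1 h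

variable [NeZero (2 : F)]

theorem map_one_and_map_zero (hf : IsSDMap f) : f 1 = 1 ∧ f 0 = 0 := by
  have two_ne_one : (2 : F) ≠ 1 := fun h => one_ne_zero (by linear_combination h)
  -- `(1, 0)` and `(2, 0)` both have sum-to-difference ratio `1`.
  have h1 := (hf one_ne_zero).2
  have h2 := (hf (two_ne_zero (α := F))).2
  simp only [add_zero, sub_zero, div_one, div_self (two_ne_zero (α := F))] at h1 h2
  rw [eq_div_iff (sub_ne_zero.mpr (hf one_ne_zero).1)] at h1
  rw [eq_div_iff (sub_ne_zero.mpr (hf two_ne_zero).1)] at h2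
  have hf1 : f 1 = 1 := by
    have key : (f 1 - 1) * (f 2 - f 1) = 0 := by linear_combination h2 - h1
    exact sub_eq_zero.mp ((mul_eq_zero.mp key).resolve_right (sub_ne_zero.mpr (hf two_ne_one).1))
  have key : (2 : F) * f 0 = 0 := by linear_combination hf1 * (f 1 - f 0) - h1
  exact ⟨hf1, (mul_eq_zero.mp key).resolve_left two_ne_zero⟩

theorem map_one (hf : IsSDMap f) : f 1 = 1 := hf.map_one_and_map_zero.1

theorem map_zero (hf : IsSDMap f) : f 0 = 0 := hf.map_one_and_map_zero.2

theorem map_add_one_div_sub_one (hf : IsSDMap f) {t : F} (ht : t ≠ 1) :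
    f ((t + 1) / (t - 1)) = (f t + 1) / (f t - 1) := by
  simpa only [hf.map_one] using (hf ht).2

theorem map_div (hf : IsSDMap f) (x y : F) : f (x / y) = f x / f y := by
  rcases eq_or_ne y 0 with rfl | hy
  · simp [hf.map_zero]
  have hfy : f y ≠ 0 := hf.map_zero ▸ hf.injective.ne hy
  rcases eq_or_ne x y with rfl | hxy
  · rw [div_self hy, div_self hfy, hf.map_one]
  have hxy1 : x / y ≠ 1 := fun h => hxy ((div_eq_one_iff_eq hy).mp h)
  have hfxy1 : f x / f y ≠ 1 := fun h => (hf hxy).1 ((div_eq_one_iff_eq hfy).mp h)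
  have h := (hf hxy).2
  rw [add_div_sub_eq_of_ne_zero hy, hf.map_add_one_div_sub_one hxy1,
    add_div_sub_eq_of_ne_zero hfy] at h
  exact eq_of_add_one_div_sub_one_eq (hf.map_one ▸ hf.injective.ne hxy1) hfxy1 h

theorem map_inv (hf : IsSDMap f) (x : F) : f x⁻¹ = (f x)⁻¹ := by
  simpa [hf.map_one] using hf.map_div 1 x

theorem map_mul (hf : IsSDMap f) (x y : F) : f (x * y) = f x * f y := by
  rw [← div_inv_eq_mul, hf.map_div, hf.map_inv, div_inv_eq_mul]

theorem map_neg_one (hf : IsSDMap f) : f (-1) = -1 := by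
  have hsq : f (-1) * f (-1) = 1 := by rw [← hf.map_mul, neg_one_mul, neg_neg, hf.map_one]
  have hne : f (-1) ≠ f 1 :=
    hf.injective.ne fun h : (-1 : F) = 1 => two_ne_zero (α := F) (by linear_combination -h)
  rw [hf.map_one] at hne
  exact (mul_self_eq_one_iff.mp hsq).resolve_left hne

theorem map_neg (hf : IsSDMap f) (x : F) : f (-x) = -f x := by
  rw [neg_eq_neg_one_mul, hf.map_mul, hf.map_neg_one, neg_one_mul]

end IsSDMap

end Field

namespace IsSDMap

variable {f : ℝ → ℝ}

theorem pos_of_pos (hf : IsSDMap f) {x : ℝ} (hx : 0 < x) : 0 < f x := by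
  have hne : f √x ≠ 0 := hf.map_zero ▸ hf.injective.ne (Real.sqrt_pos.mpr hx).ne'
  rw [← Real.mul_self_sqrt hx.le, hf.map_mul]
  exact mul_self_pos.mpr hne

theorem one_lt_of_one_lt (hf : IsSDMap f) {x : ℝ} (hx : 1 < x) : 1 < f x := by
  have hpos : 0 < (f x + 1) / (f x - 1) := by
    rw [← hf.map_add_one_div_sub_one hx.ne']
    exact hf.pos_of_pos (div_pos (by linarith) (by linarith))
  have hfx : 0 < f x + 1 := by linarith [hf.pos_of_pos (zero_lt_one.trans hx)]
  linarith [(div_pos_iff_of_pos_left hfx).mp hpos]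

theorem strictMonoOn_nonneg (hf : IsSDMap f) : StrictMonoOn f (Set.Ici 0) := by
  intro b hb a _ hba
  rcases (Set.mem_Ici.mp hb).eq_or_lt with rfl | hb
  · rw [hf.map_zero]
    exact hf.pos_of_pos hba
  calc f b < f (a / b) * f b :=
        lt_mul_of_one_lt_left (hf.pos_of_pos hb) (hf.one_lt_of_one_lt ((one_lt_div hb).mpr hba))
    _ = f a := by rw [← hf.map_mul, div_mul_cancel₀ a hb.ne']

theorem strictMono (hf : IsSDMap f) : StrictMono f :=
  strictMono_of_odd_strictMonoOn_nonneg hf.map_neg hf.strictMonoOn_nonneg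

end IsSDMap

theorem sd_map_real_pos_and_strictMono (f : ℝ → ℝ) (hf : IsSDMap f) :
    (∀ x : ℝ, 0 < x → 0 < f x) ∧ (∀ a b : ℝ, a > b → f a > f b) :=
  ⟨fun _ => hf.pos_of_pos, fun _ _ hab => hf.strictMono hab⟩
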